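/- arXiv:1608.08581 — 6 statements merged into one kernel-verified Lean document; each statement's English description precedes it below -/
import Mathlib

section
/- Assume A ≠ 0, i.e. there exist λ ∈ ℤ^r and t ∈ T with λ^∨(t) ≠ 1. Then there is no group isomorphism φ : C_B(T) → C_{2B}(T) such that φ(w,1,0) = (w,1,0) for all w ∈ ℂˣ and such that for every (w,t,λ) the last two components of φ(w,t,λ) equal (t,λ) (i.e. φ induces the identity on the quotient T × ℤ^r). In other words, the central extensions C_B(T) and C_{2B}(T) of T × ℤ^r by ℂˣ are not isomorphic as extensions. -/
/-- Elements of the central extension: `ℂˣ × T × ℤ^r` where `T = (ℂˣ)^r`. -/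
abbrev CE (r : ℕ) := ℂˣ × (Fin r → ℂˣ) × (Fin r → ℤ)

/-- The character `λ^∨(t) = ∏ j, t j ^ (Aλ)_j`. -/
noncomputable def chDual {r : ℕ} (A : Matrix (Fin r) (Fin r) ℤ) (lam : Fin r → ℤ)
    (t : Fin r → ℂˣ) : ℂˣ :=
  ∏ j, t j ^ (A.mulVec lam j)

/-- Multiplication `⋆_B` on `ℂˣ × T × ℤ^r`. -/
noncomputable def mulB {r : ℕ} (A : Matrix (Fin r) (Fin r) ℤ) (g₁ g₂ : CE r) : CE r :=
  (g₁.1 * g₂.1 * chDual A g₂.2.2 g₁.2.1, g₁.2.1 * g₂.2.1, g₁.2.2 + g₂.2.2)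

/-- Multiplication `⋆_{2B}` on `ℂˣ × T × ℤ^r`. -/
noncomputable def mul2B {r : ℕ} (A : Matrix (Fin r) (Fin r) ℤ) (g₁ g₂ : CE r) : CE r :=
  (g₁.1 * g₂.1 * chDual A g₂.2.2 g₁.2.1 * (chDual A g₁.2.2 g₂.2.1)⁻¹,
    g₁.2.1 * g₂.2.1, g₁.2.2 + g₂.2.2)

/-- if `A ≠ 0` (i.e. some `λ^∨(t) ≠ 1`), then there is no group isomorphism
`φ : C_B(T) → C_{2B}(T)` which is the identity on the central `ℂˣ` and induces the
identity on the quotient `T × ℤ^r`; i.e. the two central extensions are not isomorphic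
as extensions. -/
theorem stmt2 (r : ℕ) (hr : 1 ≤ r) (A : Matrix (Fin r) (Fin r) ℤ) (hA : A.IsSymm)
    (hA0 : ∃ (lam : Fin r → ℤ) (t : Fin r → ℂˣ), chDual A lam t ≠ 1) :
    ¬ ∃ φ : CE r → CE r,
        Function.Bijective φ ∧
        (∀ g₁ g₂ : CE r, φ (mulB A g₁ g₂) = mul2B A (φ g₁) (φ g₂)) ∧
        (∀ w : ℂˣ, φ (w, 1, 0) = (w, 1, 0)) ∧
        (∀ g : CE r, (φ g).2 = g.2) := by
  rintro ⟨φ, hbij, hmul, hcen, hquot⟩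
  obtain ⟨lam, t, hne⟩ := hA0
  apply hne
  have hch1 : ∀ ll : Fin r → ℤ, chDual A ll (1 : Fin r → ℂˣ) = 1 := by
    intro ll; simp [chDual]
  have hch0 : ∀ s : Fin r → ℂˣ, chDual A (0 : Fin r → ℤ) s = 1 := by
    intro s; simp [chDual, Matrix.mulVec_zero]
  have hφdecomp : ∀ g : CE r, φ g = ((φ g).1, g.2.1, g.2.2) := by
    intro g
    exact Prod.ext rfl (by rw [hquot g])
  have hcent : ∀ (w : ℂˣ) (tt : Fin r → ℂˣ) (ll : Fin r → ℤ),
      (φ (w, tt, ll)).1 = w * (φ ((1 : ℂˣ), tt, ll)).1 := by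
    intro w tt ll
    have h := hmul (w, 1, 0) (1, tt, ll)
    have hL : mulB A (w, 1, 0) (1, tt, ll) = (w, tt, ll) := by
      simp [mulB, hch1]
    rw [hL, hcen w, hφdecomp ((1 : ℂˣ), tt, ll)] at h
    have := congrArg Prod.fst h
    simpa [mul2B, hch1, hch0] using this
  set χ := chDual A lam t with hχ
  set a := (φ ((1 : ℂˣ), 1, lam)).1 with ha
  set b := (φ ((1 : ℂˣ), t, 0)).1 with hb
  set c := (φ ((1 : ℂˣ), t, lam)).1 with hc
  have h1 := hmul ((1 : ℂˣ), 1, lam) ((1 : ℂˣ), t, 0)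
  have hL1 : mulB A ((1 : ℂˣ), 1, lam) ((1 : ℂˣ), t, 0) = ((1 : ℂˣ), t, lam) := by
    simp [mulB, hch0]
  rw [hL1, hφdecomp ((1 : ℂˣ), 1, lam), hφdecomp ((1 : ℂˣ), t, 0)] at h1
  have e1 : c = a * b * χ⁻¹ := by
    have := congrArg Prod.fst h1
    simpa [mul2B, hch0, ← ha, ← hb, ← hc, ← hχ, mul_comm, mul_assoc, mul_left_comm]
      using this
  have h2 := hmul ((1 : ℂˣ), t, 0) ((1 : ℂˣ), 1, lam)
  have hL2 : mulB A ((1 : ℂˣ), t, 0) ((1 : ℂˣ), 1, lam) = (χ, t, lam) := by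
    simp [mulB, hχ]
  rw [hL2, hφdecomp ((1 : ℂˣ), t, 0), hφdecomp ((1 : ℂˣ), 1, lam)] at h2
  have e2 : χ * c = a * b * χ := by
    have := congrArg Prod.fst h2
    rw [hcent χ t lam] at this
    simpa [mul2B, hch0, hch1, ← ha, ← hb, ← hc, ← hχ, mul_comm, mul_assoc,
      mul_left_comm] using this
  rw [e1] at e2
  have key : a * b * 1 = a * b * χ := by
    rw [mul_one]
    calc a * b = χ * (a * b * χ⁻¹) := by
          rw [mul_comm χ, mul_assoc, inv_mul_cancel, mul_one]
    _ = a * b * χ := e2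
  exact (mul_left_cancel key).symm
end

section
/- For g = (w,t,λ) ∈ C_{2B}(T) define the linear map ρ₂(g) : V → V on basis vectors by ρ₂(g)(δ_μ) = w·μ^∨(t)²·λ^∨(t)·δ_{μ+λ}. Then each ρ₂(g) is a linear automorphism of V, ρ₂(g₁ ⋆_{2B} g₂) = ρ₂(g₁) ∘ ρ₂(g₂) for all g₁, g₂ ∈ C_{2B}(T), and the central element (w,1,0) acts as scalar multiplication by w (the center ℂˣ acts with weight 1). Thus ρ₂ is a representation of C_{2B}(T) on V. -/
/-- `V` is the ℂ-vector space of finitely supported functions `ℤ^r → ℂ`,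
with standard basis `δ_μ = Finsupp.single μ 1`. -/
abbrev Vsp (r : ℕ) := (Fin r → ℤ) →₀ ℂ

lemma chDual_mul_right {r : ℕ} (A : Matrix (Fin r) (Fin r) ℤ) (lam : Fin r → ℤ)
    (t₁ t₂ : Fin r → ℂˣ) :
    chDual A lam (t₁ * t₂) = chDual A lam t₁ * chDual A lam t₂ := by
  simp [chDual, mul_zpow, Finset.prod_mul_distrib]

lemma chDual_add {r : ℕ} (A : Matrix (Fin r) (Fin r) ℤ) (μ ν : Fin r → ℤ)
    (t : Fin r → ℂˣ) :
    chDual A (μ + ν) t = chDual A μ t * chDual A ν t := by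
  simp [chDual, Matrix.mulVec_add, zpow_add, Finset.prod_mul_distrib]

lemma chDual_one {r : ℕ} (A : Matrix (Fin r) (Fin r) ℤ) (lam : Fin r → ℤ) :
    chDual A lam 1 = 1 := by simp [chDual]

lemma chDual_zero {r : ℕ} (A : Matrix (Fin r) (Fin r) ℤ) (t : Fin r → ℂˣ) :
    chDual A 0 t = 1 := by simp [chDual]

lemma chDual_inv {r : ℕ} (A : Matrix (Fin r) (Fin r) ℤ) (lam : Fin r → ℤ)
    (t : Fin r → ℂˣ) : chDual A lam t⁻¹ = (chDual A lam t)⁻¹ := by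
  simp [chDual, inv_zpow]

lemma chDual_neg {r : ℕ} (A : Matrix (Fin r) (Fin r) ℤ) (lam : Fin r → ℤ)
    (t : Fin r → ℂˣ) : chDual A (-lam) t = (chDual A lam t)⁻¹ := by
  simp [chDual, Matrix.mulVec_neg, zpow_neg]

/-- the prescription `ρ₂(w,t,λ)(δ_μ) = w·μ^∨(t)²·λ^∨(t)·δ_{μ+λ}` defines a
representation of `C_{2B}(T)` on `V`: each `ρ₂(g)` is a linear automorphism,
`ρ₂(g₁ ⋆_{2B} g₂) = ρ₂(g₁) ∘ ρ₂(g₂)`, and the central element `(w,1,0)` acts as scalar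
multiplication by `w`. -/
theorem stmt4 (r : ℕ) (hr : 1 ≤ r) (A : Matrix (Fin r) (Fin r) ℤ) (hA : A.IsSymm)
    (ρ₂ : CE r → (Vsp r →ₗ[ℂ] Vsp r))
    (hρ₂ : ∀ (g : CE r) (μ : Fin r → ℤ),
      ρ₂ g (Finsupp.single μ 1)
        = ((g.1 * (chDual A μ g.2.1) ^ 2 * chDual A g.2.2 g.2.1 : ℂˣ) : ℂ)
            • Finsupp.single (μ + g.2.2) (1 : ℂ)) :
    (∀ g : CE r, Function.Bijective (ρ₂ g)) ∧
    (∀ g₁ g₂ : CE r, ρ₂ (mul2B A g₁ g₂) = (ρ₂ g₁) ∘ₗ (ρ₂ g₂)) ∧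
    (∀ (w : ℂˣ) (v : Vsp r), ρ₂ (w, 1, 0) v = (w : ℂ) • v) := by
  have hmul : ∀ g₁ g₂ : CE r, ρ₂ (mul2B A g₁ g₂) = (ρ₂ g₁) ∘ₗ (ρ₂ g₂) := by
    intro g₁ g₂
    obtain ⟨w₁, t₁, l₁⟩ := g₁; obtain ⟨w₂, t₂, l₂⟩ := g₂
    apply Finsupp.lhom_ext' (fun μ => ?_)
    apply LinearMap.ext (fun c => ?_)
    simp only [LinearMap.comp_apply, Finsupp.lsingle_apply]
    have hc : (Finsupp.single μ c : Vsp r) = c • Finsupp.single μ 1 := by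
      simp [Finsupp.smul_single]
    rw [hc, map_smul, map_smul, map_smul, hρ₂, hρ₂, map_smul, hρ₂]
    simp only [mul2B, chDual_mul_right, chDual_add, smul_smul]
    rw [show μ + (l₁ + l₂) = μ + l₂ + l₁ by abel]
    congr 1
    push_cast
    field_simp
  have hid : ρ₂ ((1 : ℂˣ), 1, 0) = LinearMap.id := by
    apply Finsupp.lhom_ext' (fun μ => ?_)
    apply LinearMap.ext (fun c => ?_)
    simp only [LinearMap.comp_apply, Finsupp.lsingle_apply, LinearMap.id_coe, id_eq]
    have hc : (Finsupp.single μ c : Vsp r) = c • Finsupp.single μ 1 := by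
      simp [Finsupp.smul_single]
    rw [hc, map_smul, hρ₂]
    simp [chDual_one, chDual_zero]
  refine ⟨?_, hmul, ?_⟩
  · intro g
    obtain ⟨w, t, l⟩ := g
    set g' : CE r := (w⁻¹, t⁻¹, -l) with hg'
    have h1 : mul2B A (w, t, l) g' = ((1 : ℂˣ), 1, 0) := by
      simp [mul2B, hg', chDual_inv, chDual_neg, mul_comm]
    have h2 : mul2B A g' (w, t, l) = ((1 : ℂˣ), 1, 0) := by
      simp [mul2B, hg', chDual_inv, chDual_neg, mul_comm]
    have e1 : (ρ₂ (w, t, l)) ∘ₗ (ρ₂ g') = LinearMap.id := by rw [← hmul, h1, hid]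
    have e2 : (ρ₂ g') ∘ₗ (ρ₂ (w, t, l)) = LinearMap.id := by rw [← hmul, h2, hid]
    refine Function.bijective_iff_has_inverse.2 ⟨ρ₂ g', ?_, ?_⟩
    · exact fun v => by simpa using LinearMap.congr_fun e2 v
    · exact fun v => by simpa using LinearMap.congr_fun e1 v
  · intro w v
    have : ρ₂ (w, 1, 0) = (w : ℂ) • LinearMap.id := by
      apply Finsupp.lhom_ext' (fun μ => ?_)
      apply LinearMap.ext (fun c => ?_)
      simp only [LinearMap.comp_apply, Finsupp.lsingle_apply, LinearMap.smul_apply,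
        LinearMap.id_coe, id_eq]
      have hc : (Finsupp.single μ c : Vsp r) = c • Finsupp.single μ 1 := by
        simp [Finsupp.smul_single]
      rw [hc, map_smul, hρ₂]
      simp [chDual_one, chDual_zero, smul_smul, mul_comm]
    rw [this]; rfl
end

section
/- Assume B(λ,λ) is even for every λ ∈ ℤ^r. For θ ∈ ℂˣ define ψ_θ : C_B(T) → C_B(T) by ψ_θ(w,t,λ) = (w·θ^{B(λ,λ)/2}, t·λ(θ), λ). Then each ψ_θ is a group automorphism of C_B(T), and ψ_{θθ'} = ψ_θ ∘ ψ_{θ'} with ψ_1 = id; that is, θ ↦ ψ_θ is a group homomorphism ℂˣ → Aut(C_B(T)) lifting the loop rotation action on T × ℤ^r. -/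
/-- The quadratic form `B(λ,λ) = λᵀAλ`. -/
def quadForm {r : ℕ} (A : Matrix (Fin r) (Fin r) ℤ) (lam : Fin r → ℤ) : ℤ :=
  dotProduct lam (A.mulVec lam)

/-- The point `λ(θ) = (θ^{λ_1}, …, θ^{λ_r}) ∈ T` of the cocharacter `λ` at `θ`. -/
noncomputable def cochar {r : ℕ} (lam : Fin r → ℤ) (θ : ℂˣ) : Fin r → ℂˣ :=
  fun j => θ ^ lam j

/-- Loop rotation `ψ_θ(w,t,λ) = (w·θ^{B(λ,λ)/2}, t·λ(θ), λ)` on `C_B(T)`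
(assuming `B(λ,λ)` is always even, `B(λ,λ)/2` is honest integer division). -/
noncomputable def rotB {r : ℕ} (A : Matrix (Fin r) (Fin r) ℤ) (θ : ℂˣ) (g : CE r) : CE r :=
  (g.1 * θ ^ (quadForm A g.2.2 / 2), g.2.1 * cochar g.2.2 θ, g.2.2)

/-- if `B(λ,λ)` is even for all `λ`, then each `ψ_θ` is a group automorphism
of `C_B(T)`, and `θ ↦ ψ_θ` is a group homomorphism `ℂˣ → Aut(C_B(T))`:
`ψ_{θθ'} = ψ_θ ∘ ψ_{θ'}` and `ψ_1 = id`. -/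
theorem stmt6 (r : ℕ) (hr : 1 ≤ r) (A : Matrix (Fin r) (Fin r) ℤ) (hA : A.IsSymm)
    (heven : ∀ lam : Fin r → ℤ, Even (quadForm A lam)) :
    (∀ θ : ℂˣ, Function.Bijective (rotB A θ)) ∧
    (∀ (θ : ℂˣ) (g₁ g₂ : CE r), rotB A θ (mulB A g₁ g₂) = mulB A (rotB A θ g₁) (rotB A θ g₂)) ∧
    (∀ θ θ' : ℂˣ, rotB A (θ * θ') = (rotB A θ) ∘ (rotB A θ')) ∧
    (rotB A (1 : ℂˣ) = id) := by

  classical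
  -- θ ^ (sum) = prod of θ ^ f j
  have hzpow_sum : ∀ (θ : ℂˣ) (f : Fin r → ℤ),
      θ ^ (∑ j, f j) = ∏ j, θ ^ (f j) := by
    intro θ f
    induction (Finset.univ : Finset (Fin r)) using Finset.induction with
    | empty => simp
    | insert _ _ h ih => rw [Finset.sum_insert h, Finset.prod_insert h, zpow_add, ih]
  -- symmetry of the bilinear form
  have hsym : ∀ v w : Fin r → ℤ,
      dotProduct v (A.mulVec w) = dotProduct w (A.mulVec v) := by
    intro v w
    simp only [dotProduct, Matrix.mulVec, Finset.mul_sum]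
    rw [Finset.sum_comm]
    refine Finset.sum_congr rfl fun i _ => Finset.sum_congr rfl fun j _ => ?_
    rw [hA.apply i j]
    ring
  -- chDual of a shifted point
  have hch : ∀ (lam mu : Fin r → ℤ) (t : Fin r → ℂˣ) (θ : ℂˣ),
      chDual A lam (t * cochar mu θ) =
        chDual A lam t * θ ^ (dotProduct mu (A.mulVec lam)) := by
    intro lam mu t θ
    simp only [chDual, cochar, Pi.mul_apply, mul_zpow, dotProduct, hzpow_sum,
      Finset.prod_mul_distrib, ← zpow_mul]
  -- the key identity on the quadratic form
  have hq : ∀ lam mu : Fin r → ℤ,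
      quadForm A (lam + mu) / 2 =
        quadForm A lam / 2 + quadForm A mu / 2 + dotProduct mu (A.mulVec lam) := by
    intro lam mu
    have hsum : quadForm A (lam + mu) =
        quadForm A lam + quadForm A mu + 2 * dotProduct mu (A.mulVec lam) := by
      simp only [quadForm, Matrix.mulVec_add, dotProduct_add, add_dotProduct]
      rw [hsym lam mu]
      ring
    obtain ⟨a, ha⟩ := heven lam
    obtain ⟨b, hb⟩ := heven mu
    omega
  -- ψ_1 = id
  have hone : rotB A (1 : ℂˣ) = id := by
    funext g
    refine Prod.ext ?_ (Prod.ext ?_ rfl)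
    · simp [rotB]
    · funext j
      simp [rotB, cochar]
  -- ψ is multiplicative in θ
  have hcomp : ∀ θ θ' : ℂˣ, rotB A (θ * θ') = (rotB A θ) ∘ (rotB A θ') := by
    intro θ θ'
    funext g
    refine Prod.ext ?_ (Prod.ext ?_ rfl)
    · simp only [rotB, Function.comp_apply, mul_zpow, mul_assoc]
      rw [mul_comm (θ ^ _)]
    · funext j
      simp only [rotB, Function.comp_apply, cochar, Pi.mul_apply, mul_zpow]
      rw [← mul_assoc, mul_right_comm]
  refine ⟨?_, ?_, hcomp, hone⟩
  · intro θ
    refine Function.bijective_iff_has_inverse.mpr ⟨rotB A θ⁻¹, ?_, ?_⟩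
    · intro g
      have : (rotB A θ⁻¹ ∘ rotB A θ) g = id g := by
        rw [← hcomp, inv_mul_cancel, hone]
      simpa using this
    · intro g
      have : (rotB A θ ∘ rotB A θ⁻¹) g = id g := by
        rw [← hcomp, mul_inv_cancel, hone]
      simpa using this
  · intro θ g₁ g₂
    refine Prod.ext ?_ (Prod.ext ?_ rfl)
    · show (g₁.1 * g₂.1 * chDual A g₂.2.2 g₁.2.1) * θ ^ (quadForm A (g₁.2.2 + g₂.2.2) / 2) =
        (g₁.1 * θ ^ (quadForm A g₁.2.2 / 2)) * (g₂.1 * θ ^ (quadForm A g₂.2.2 / 2)) *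
          chDual A g₂.2.2 (g₁.2.1 * cochar g₁.2.2 θ)
      rw [hch, hq g₁.2.2 g₂.2.2, hsym g₂.2.2 g₁.2.2]
      rw [zpow_add, zpow_add]
      simp only [mul_comm, mul_left_comm, mul_assoc]
    · show (g₁.2.1 * g₂.2.1) * cochar (g₁.2.2 + g₂.2.2) θ =
        (g₁.2.1 * cochar g₁.2.2 θ) * (g₂.2.1 * cochar g₂.2.2 θ)
      funext j
      simp only [cochar, Pi.mul_apply, Pi.add_apply, zpow_add]
      exact mul_mul_mul_comm _ _ _ _
end

section
/- For θ ∈ ℂˣ define the linear automorphism σ(θ) : V → V by σ(θ)(δ_μ) = θ^{B(μ,μ)}·δ_μ, and define φ_θ(w,t,λ) = (w, t·λ(θ), λ). Then for every θ ∈ ℂˣ and every g ∈ C_{2B}(T), σ(θ) ∘ ρ₂(g) ∘ σ(θ)⁻¹ = ρ₂(φ_θ(g)). In particular, the actions ρ₂ and σ together define a representation of the semidirect product ℂˣ ⋉ C_{2B}(T) (loop rotation acting via φ) on V. -/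
/-- Loop rotation `φ_θ(w,t,λ) = (w, t·λ(θ), λ)` on `C_{2B}(T)`. -/
noncomputable def rot2B {r : ℕ} (θ : ℂˣ) (g : CE r) : CE r :=
  (g.1, g.2.1 * cochar g.2.2 θ, g.2.2)

lemma zpow_sum'' {G : Type*} [CommGroup G] {ι : Type*} (a : G) (s : Finset ι) (f : ι → ℤ) :
    a ^ (∑ i ∈ s, f i) = ∏ i ∈ s, a ^ f i := by
  classical
  induction s using Finset.cons_induction with
  | empty => simp
  | cons i s hi ih => rw [Finset.sum_cons, Finset.prod_cons, zpow_add, ih]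

lemma chDual_mul_cochar {r : ℕ} (A : Matrix (Fin r) (Fin r) ℤ) (ν lam : Fin r → ℤ)
    (t : Fin r → ℂˣ) (θ : ℂˣ) :
    chDual A ν (t * cochar lam θ) = chDual A ν t * θ ^ (dotProduct lam (A.mulVec ν)) := by
  unfold chDual cochar dotProduct
  simp only [Pi.mul_apply, mul_zpow, Finset.prod_mul_distrib, ← zpow_mul]
  rw [zpow_sum'']

lemma quad_add {r : ℕ} (A : Matrix (Fin r) (Fin r) ℤ) (hA : A.IsSymm) (μ lam : Fin r → ℤ) :
    quadForm A (μ + lam) = quadForm A μ + (2 * dotProduct lam (A.mulVec μ) + quadForm A lam) := by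
  have hsym : dotProduct μ (A.mulVec lam) = dotProduct lam (A.mulVec μ) := by
    rw [Matrix.dotProduct_mulVec, ← Matrix.mulVec_transpose, hA.eq, dotProduct_comm]
  simp only [quadForm, Matrix.mulVec_add, add_dotProduct, dotProduct_add, hsym]
  ring

/-- with `σ(θ)(δ_μ) = θ^{B(μ,μ)}·δ_μ` and
`ρ₂(w,t,λ)(δ_μ) = w·μ^∨(t)²·λ^∨(t)·δ_{μ+λ}`, one has
`σ(θ) ∘ ρ₂(g) ∘ σ(θ)⁻¹ = ρ₂(φ_θ(g))` for all `θ ∈ ℂˣ` and `g ∈ C_{2B}(T)`;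
so `ρ₂` and `σ` assemble into a representation of `ℂˣ ⋉ C_{2B}(T)` on `V`. -/
theorem stmt7 (r : ℕ) (hr : 1 ≤ r) (A : Matrix (Fin r) (Fin r) ℤ) (hA : A.IsSymm)
    (ρ₂ : CE r → (Vsp r →ₗ[ℂ] Vsp r))
    (hρ₂ : ∀ (g : CE r) (μ : Fin r → ℤ),
      ρ₂ g (Finsupp.single μ 1)
        = ((g.1 * (chDual A μ g.2.1) ^ 2 * chDual A g.2.2 g.2.1 : ℂˣ) : ℂ)
            • Finsupp.single (μ + g.2.2) (1 : ℂ))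
    (σ : ℂˣ → (Vsp r ≃ₗ[ℂ] Vsp r))
    (hσ : ∀ (θ : ℂˣ) (μ : Fin r → ℤ),
      σ θ (Finsupp.single μ 1) = ((θ ^ quadForm A μ : ℂˣ) : ℂ) • Finsupp.single μ (1 : ℂ)) :
    ∀ (θ : ℂˣ) (g : CE r),
      (σ θ).toLinearMap ∘ₗ (ρ₂ g) ∘ₗ ((σ θ).symm).toLinearMap = ρ₂ (rot2B θ g) := by
  intro θ g
  obtain ⟨w, t, lam⟩ := g
  have hθ : (θ : ℂ) ≠ 0 := θ.ne_zero
  have hsymm : ∀ μ : Fin r → ℤ, (σ θ).symm (Finsupp.single μ 1)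
      = (((θ ^ quadForm A μ)⁻¹ : ℂˣ) : ℂ) • Finsupp.single μ (1 : ℂ) := by
    intro μ
    apply (σ θ).injective
    rw [LinearEquiv.apply_symm_apply, map_smul, hσ, smul_smul, ← Units.val_mul,
      inv_mul_cancel, Units.val_one, one_smul]
  apply Finsupp.lhom_ext
  intro μ c
  have hc : (Finsupp.single μ c : Vsp r) = c • Finsupp.single μ (1:ℂ) := by
    rw [Finsupp.smul_single, smul_eq_mul, mul_one]
  rw [hc, map_smul, map_smul]
  congr 1
  simp only [LinearMap.comp_apply, LinearEquiv.coe_coe, hsymm, map_smul, hρ₂, hσ, smul_smul,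
    rot2B]
  simp only [chDual_mul_cochar]
  congr 1
  rw [quad_add A hA μ lam]
  simp only [Units.val_mul, Units.val_inv_eq_inv_val, Units.val_zpow_eq_zpow_val,
    Units.val_pow_eq_pow_val, zpow_add₀ hθ, two_mul]
  have h1 : (θ:ℂ) ^ quadForm A μ ≠ 0 := zpow_ne_zero _ hθ
  field_simp
  rfl
end

section
/- For every x ∈ ℝ^r, the dimension of the Delaunay cell D(x) plus the dimension of the Voronoi cell V(D(x)) equals r, where the dimension of a subset of ℝ^r is the dimension of the direction submodule of its affine span. -/
/-- The embedding `ℤ^r ⊆ ℝ^r`. -/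
noncomputable def latE {r : ℕ} (lam : Fin r → ℤ) : Fin r → ℝ := fun i => (lam i : ℝ)

/-- The norm `|v| = √(B(v,v))` associated to the bilinear form `B`. -/
noncomputable def nrmB {r : ℕ} (B : LinearMap.BilinForm ℝ (Fin r → ℝ)) (v : Fin r → ℝ) : ℝ :=
  Real.sqrt (B v v)

/-- `sta B x` is the set of `x`-stations: lattice points at minimal distance from `x`. -/
def sta {r : ℕ} (B : LinearMap.BilinForm ℝ (Fin r → ℝ)) (x : Fin r → ℝ) :
    Set (Fin r → ℤ) :=
  {lam | ∀ mu : Fin r → ℤ, nrmB B (x - latE lam) ≤ nrmB B (x - latE mu)}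

/-- The Delaunay cell `D(x) = conv(sta(x)) ⊆ ℝ^r`. -/
noncomputable def Dcell {r : ℕ} (B : LinearMap.BilinForm ℝ (Fin r → ℝ)) (x : Fin r → ℝ) :
    Set (Fin r → ℝ) :=
  convexHull ℝ (latE '' sta B x)

/-- The Voronoi cell `V(σ)` of a Delaunay cell `σ`: the closure of `{x : D(x) = σ}`. -/
noncomputable def Vcell {r : ℕ} (B : LinearMap.BilinForm ℝ (Fin r → ℝ))
    (σ : Set (Fin r → ℝ)) : Set (Fin r → ℝ) :=
  closure {x : Fin r → ℝ | Dcell B x = σ}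

/-- The dimension of a subset of `ℝ^r`: the dimension of the direction submodule of its
affine span. -/
noncomputable def setDim {r : ℕ} (S : Set (Fin r → ℝ)) : ℕ :=
  Module.finrank ℝ (affineSpan ℝ S).direction

section lemmas
variable {r : ℕ} {B : LinearMap.BilinForm ℝ (Fin r → ℝ)}

def HSymm (B : LinearMap.BilinForm ℝ (Fin r → ℝ)) : Prop := ∀ x y : Fin r → ℝ, B x y = B y x
def HPos (B : LinearMap.BilinForm ℝ (Fin r → ℝ)) : Prop := ∀ x : Fin r → ℝ, x ≠ 0 → 0 < B x x

lemma Bnonneg (hpos : HPos B) (v : Fin r → ℝ) : 0 ≤ B v v := by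
  rcases eq_or_ne v 0 with h | h
  · simp [h]
  · exact (hpos v h).le

lemma Bdef (hpos : HPos B) {v : Fin r → ℝ} (h : B v v = 0) : v = 0 := by
  by_contra hv; exact absurd h (hpos v hv).ne'

lemma nrmB_nonneg (v : Fin r → ℝ) : 0 ≤ nrmB B v := Real.sqrt_nonneg _

lemma nrmB_sq (hpos : HPos B) (v : Fin r → ℝ) : nrmB B v ^ 2 = B v v :=
  Real.sq_sqrt (Bnonneg hpos v)

lemma nrmB_le_nrmB {u v : Fin r → ℝ} (h : B u u ≤ B v v) : nrmB B u ≤ nrmB B v :=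
  Real.sqrt_le_sqrt h

lemma B_le_of_nrmB_le (hpos : HPos B) {u v : Fin r → ℝ} (h : nrmB B u ≤ nrmB B v) :
    B u u ≤ B v v := by
  have := pow_le_pow_left₀ (nrmB_nonneg u) h 2
  rwa [nrmB_sq hpos, nrmB_sq hpos] at this

lemma nrmB_eq_zero (hpos : HPos B) {v : Fin r → ℝ} (h : nrmB B v = 0) : v = 0 := by
  apply Bdef hpos
  have h2 : nrmB B v ^ 2 = B v v := nrmB_sq hpos v
  rw [h] at h2; simpa using h2.symm

lemma nrmB_smul (t : ℝ) (v : Fin r → ℝ) : nrmB B (t • v) = |t| * nrmB B v := by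
  unfold nrmB
  have h : B (t • v) (t • v) = t ^ 2 * B v v := by
    simp [map_smul, smul_eq_mul]; ring
  rw [h, Real.sqrt_mul (sq_nonneg t), Real.sqrt_sq_eq_abs]

lemma nrmB_neg (v : Fin r → ℝ) : nrmB B (-v) = nrmB B v := by
  have := nrmB_smul (B := B) (-1) v
  simpa using this

lemma cauchyB (hsymm : HSymm B) (hpos : HPos B) (u v : Fin r → ℝ) :
    B u v ≤ nrmB B u * nrmB B v := by
  have h2 : (B u v) ^ 2 ≤ B u u * B v v := by
    rcases eq_or_ne v 0 with hv | hv
    · simp [hv]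
    · have hvv : 0 < B v v := hpos v hv
      set t := B u v / B v v with ht
      have key : 0 ≤ B (u - t • v) (u - t • v) := Bnonneg hpos _
      have expand : B (u - t • v) (u - t • v) = B u u - 2 * t * B u v + t ^ 2 * B v v := by
        simp only [map_sub, map_smul, LinearMap.sub_apply, LinearMap.smul_apply, smul_eq_mul]
        rw [hsymm v u]; ring
      rw [expand] at key
      have e1 : 0 ≤ (B u u - 2 * t * B u v + t ^ 2 * B v v) * B v v := mul_nonneg key hvv.le
      have e2 : (B u u - 2 * t * B u v + t ^ 2 * B v v) * B v v
          = (B u u * B v v - (B u v) ^ 2) := by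
        rw [ht]; field_simp; ring
      rw [e2] at e1; linarith
  calc B u v ≤ |B u v| := le_abs_self _
    _ = Real.sqrt ((B u v) ^ 2) := (Real.sqrt_sq_eq_abs _).symm
    _ ≤ Real.sqrt (B u u * B v v) := Real.sqrt_le_sqrt h2
    _ = nrmB B u * nrmB B v := Real.sqrt_mul (Bnonneg hpos u) _

lemma nrmB_triangle (hsymm : HSymm B) (hpos : HPos B) (u v : Fin r → ℝ) :
    nrmB B (u + v) ≤ nrmB B u + nrmB B v := by
  have h : B (u + v) (u + v) ≤ (nrmB B u + nrmB B v) ^ 2 := by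
    have expand : B (u + v) (u + v) = B u u + 2 * B u v + B v v := by
      simp only [map_add, LinearMap.add_apply]; rw [hsymm v u]; ring
    have hc := cauchyB hsymm hpos u v
    have h1 := nrmB_sq hpos (B := B) u
    have h2 := nrmB_sq hpos (B := B) v
    nlinarith
  calc nrmB B (u + v) = Real.sqrt (B (u + v) (u + v)) := rfl
    _ ≤ Real.sqrt ((nrmB B u + nrmB B v) ^ 2) := Real.sqrt_le_sqrt h
    _ = |nrmB B u + nrmB B v| := Real.sqrt_sq_eq_abs _
    _ = nrmB B u + nrmB B v :=
        abs_of_nonneg (add_nonneg (nrmB_nonneg _) (nrmB_nonneg _))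

lemma nrmB_rev_triangle (hsymm : HSymm B) (hpos : HPos B) (u v : Fin r → ℝ) :
    nrmB B u - nrmB B v ≤ nrmB B (u + v) := by
  have h := nrmB_triangle hsymm hpos (u + v) (-v)
  rw [add_neg_cancel_right, nrmB_neg] at h
  linarith

lemma B_continuous : Continuous (fun v : Fin r → ℝ => B v v) := by
  have key : ∀ v : Fin r → ℝ,
      B v v = ∑ i, ∑ j, v i * v j * B (Pi.single j 1) (Pi.single i 1) := by
    intro v
    have hv : v = ∑ i : Fin r, v i • (Pi.single i 1 : Fin r → ℝ) := by
      ext j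
      simp [Pi.single_apply, Finset.sum_apply]
    conv_lhs => rw [hv]
    simp only [map_sum, map_smul, LinearMap.coe_sum, Finset.sum_apply, LinearMap.smul_apply,
      smul_eq_mul, Finset.mul_sum]
    exact Finset.sum_congr rfl fun i _ => Finset.sum_congr rfl fun j _ => by ring
  simp_rw [key]
  exact continuous_finset_sum _ fun i _ => continuous_finset_sum _ fun j _ =>
    ((continuous_apply i).mul (continuous_apply j)).mul continuous_const

lemma nrmB_lower (hr : 1 ≤ r) (hpos : HPos B) :
    ∃ c > 0, ∀ v : Fin r → ℝ, c * ‖v‖ ≤ nrmB B v := by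
  have hne : (Metric.sphere (0 : Fin r → ℝ) 1).Nonempty := by
    refine ⟨Pi.single ⟨0, hr⟩ 1, ?_⟩
    simp [Pi.norm_single]
  obtain ⟨v₀, hv₀s, hmin⟩ := (isCompact_sphere (0 : Fin r → ℝ) 1).exists_isMinOn hne
    (B_continuous (B := B)).continuousOn
  have hv₀ : v₀ ≠ 0 := by
    intro h; rw [h] at hv₀s; simp at hv₀s
  have hc : 0 < B v₀ v₀ := hpos v₀ hv₀
  refine ⟨Real.sqrt (B v₀ v₀), Real.sqrt_pos.mpr hc, fun v => ?_⟩
  rcases eq_or_ne v 0 with hv | hv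
  · simp [hv, nrmB]
  · have hnv : 0 < ‖v‖ := norm_pos_iff.mpr hv
    have hmem : ‖v‖⁻¹ • v ∈ Metric.sphere (0 : Fin r → ℝ) 1 := by
      simp [norm_smul, abs_of_pos (inv_pos.mpr hnv), inv_mul_cancel₀ hnv.ne']
    have h1 : B v₀ v₀ ≤ B (‖v‖⁻¹ • v) (‖v‖⁻¹ • v) := hmin hmem
    have h2 : B (‖v‖⁻¹ • v) (‖v‖⁻¹ • v) = (‖v‖⁻¹) ^ 2 * B v v := by
      simp [map_smul, smul_eq_mul]; ring
    have h3 : B v₀ v₀ * ‖v‖ ^ 2 ≤ B v v := by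
      rw [h2] at h1
      have := mul_le_mul_of_nonneg_right h1 (sq_nonneg ‖v‖)
      calc B v₀ v₀ * ‖v‖ ^ 2 ≤ (‖v‖⁻¹) ^ 2 * B v v * ‖v‖ ^ 2 := this
        _ = B v v := by field_simp
    calc Real.sqrt (B v₀ v₀) * ‖v‖
        = Real.sqrt (B v₀ v₀) * Real.sqrt (‖v‖ ^ 2) := by rw [Real.sqrt_sq hnv.le]
      _ = Real.sqrt (B v₀ v₀ * ‖v‖ ^ 2) := (Real.sqrt_mul hc.le _).symm
      _ ≤ Real.sqrt (B v v) := Real.sqrt_le_sqrt h3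
      _ = nrmB B v := rfl

lemma sta_finite (hr : 1 ≤ r) (hpos : HPos B) (x : Fin r → ℝ) (R : ℝ) :
    {lam : Fin r → ℤ | nrmB B (x - latE lam) ≤ R}.Finite := by
  obtain ⟨c, hc, hcb⟩ := nrmB_lower hr hpos
  set M : ℤ := ⌈‖x‖ + R / c⌉ with hM
  apply Set.Finite.subset (Set.Finite.pi (t := fun _ : Fin r => Set.Icc (-M) M)
    fun i => Set.finite_Icc _ _)
  intro lam hlam
  simp only [Set.mem_setOf_eq] at hlam
  intro i _
  have h1 : ‖x - latE lam‖ ≤ R / c := by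
    rw [le_div_iff₀ hc, mul_comm]
    exact (hcb _).trans hlam
  have h2 : |x i - (lam i : ℝ)| ≤ R / c := by
    have := norm_le_pi_norm (x - latE lam) i
    simpa [latE, Real.norm_eq_abs] using this.trans h1
  have h3 : |(lam i : ℝ)| ≤ ‖x‖ + R / c := by
    have hxi : |x i| ≤ ‖x‖ := by
      have := norm_le_pi_norm x i
      simpa [Real.norm_eq_abs] using this
    have habs : |(lam i : ℝ)| ≤ |x i| + |x i - (lam i : ℝ)| := by
      have h := abs_sub (x i) (x i - (lam i : ℝ))
      have : x i - (x i - (lam i : ℝ)) = (lam i : ℝ) := by ring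
      rwa [this] at h
    exact habs.trans (add_le_add hxi h2)
  have h4 : ((-M : ℤ) : ℝ) ≤ (lam i : ℝ) ∧ ((lam i : ℝ)) ≤ (M : ℝ) := by
    have hMle : ‖x‖ + R / c ≤ (M : ℝ) := Int.le_ceil _
    have := abs_le.mp h3
    constructor
    · push_cast; linarith [this.1]
    · linarith [this.2]
  simp only [Set.mem_Icc]
  exact ⟨by exact_mod_cast h4.1, by exact_mod_cast h4.2⟩


lemma sta_nonempty (hr : 1 ≤ r) (hpos : HPos B) (x : Fin r → ℝ) :
    ∃ lam, lam ∈ sta B x := by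
  have hfin := sta_finite hr hpos x (nrmB B (x - latE 0))
  have hne : {lam : Fin r → ℤ | nrmB B (x - latE lam) ≤ nrmB B (x - latE 0)}.Nonempty :=
    ⟨0, by simp⟩
  obtain ⟨lam, hlam, hmin⟩ := Set.exists_min_image _ (fun lam => nrmB B (x - latE lam)) hfin hne
  refine ⟨lam, fun mu => ?_⟩
  by_cases hmu : nrmB B (x - latE mu) ≤ nrmB B (x - latE 0)
  · exact hmin mu hmu
  · exact hlam.trans (le_of_not_ge hmu)

lemma sta_const (hpos : HPos B) {x : Fin r → ℝ} {lam mu : Fin r → ℤ}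
    (hl : lam ∈ sta B x) (hm : mu ∈ sta B x) :
    nrmB B (x - latE lam) = nrmB B (x - latE mu) :=
  le_antisymm (hl mu) (hm lam)

/-- gap lemma -/
lemma sta_gap (hr : 1 ≤ r) (hpos : HPos B) (x : Fin r → ℝ) {lam₀ : Fin r → ℤ}
    (h₀ : lam₀ ∈ sta B x) :
    ∃ ρ : ℝ, nrmB B (x - latE lam₀) < ρ ∧
      ∀ mu, mu ∉ sta B x → ρ ≤ nrmB B (x - latE mu) := by
  set m := nrmB B (x - latE lam₀) with hm
  have hfin : ({mu : Fin r → ℤ | nrmB B (x - latE mu) ≤ m + 1} \ sta B x).Finite :=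
    (sta_finite hr hpos x (m + 1)).subset Set.diff_subset
  rcases Set.eq_empty_or_nonempty ({mu : Fin r → ℤ | nrmB B (x - latE mu) ≤ m + 1} \ sta B x)
    with hE | hNE
  · refine ⟨m + 1, by linarith, fun mu hmu => ?_⟩
    by_contra hlt
    exact (Set.eq_empty_iff_forall_notMem.mp hE mu) ⟨le_of_not_ge hlt, hmu⟩
  · obtain ⟨mu₁, hmu₁, hmin⟩ :=
      Set.exists_min_image _ (fun mu => nrmB B (x - latE mu)) hfin hNE
    refine ⟨nrmB B (x - latE mu₁), ?_, fun mu hmu => ?_⟩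
    · -- m < nrm(x - mu₁): mu₁ not a station, so some lattice point strictly closer;
      -- but m is the min value
      have hge : m ≤ nrmB B (x - latE mu₁) := h₀ mu₁
      rcases lt_or_eq_of_le hge with h | h
      · exact h
      · exfalso
        apply hmu₁.2
        intro nu
        rw [← h]; exact h₀ nu
    · by_cases hle : nrmB B (x - latE mu) ≤ m + 1
      · exact hmin mu ⟨hle, hmu⟩
      · exact hmu₁.1.trans (le_of_not_ge hle)

/-- Perturbation: moving x in a direction B-orthogonal to the span of the stations,
by a small amount, does not change the station set. -/
lemma sta_perturb (hr : 1 ≤ r) (hsymm : HSymm B) (hpos : HPos B) (x : Fin r → ℝ) :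
    ∃ ε > 0, ∀ w : Fin r → ℝ,
      (∀ lam ∈ sta B x, ∀ mu ∈ sta B x, B w (latE lam - latE mu) = 0) →
      nrmB B w < ε → sta B (x + w) = sta B x := by
  obtain ⟨lam₀, h₀⟩ := sta_nonempty hr hpos x
  obtain ⟨ρ, hρm, hρ⟩ := sta_gap hr hpos x h₀
  set m := nrmB B (x - latE lam₀) with hm
  refine ⟨(ρ - m) / 2, by linarith, fun w hw hwε => ?_⟩
  have hmnn : 0 ≤ m := nrmB_nonneg _
  have hwnn : 0 ≤ nrmB B w := nrmB_nonneg _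
  -- same value on all stations
  have hval : ∀ lam ∈ sta B x, B (x + w - latE lam) (x + w - latE lam)
      = m ^ 2 + 2 * B (x - latE lam₀) w + B w w := by
    intro lam hlam
    have horth : B (x - latE lam) w = B (x - latE lam₀) w := by
      have h1 : B w (latE lam - latE lam₀) = 0 := hw lam hlam lam₀ h₀
      have h2 : B (latE lam - latE lam₀) w = 0 := by rw [hsymm]; exact h1
      have : B (x - latE lam) w = B (x - latE lam₀) w - B (latE lam - latE lam₀) w := by
        simp only [map_sub, LinearMap.sub_apply]; ring
      rw [this, h2, sub_zero]
    have hmsq : B (x - latE lam) (x - latE lam) = m ^ 2 := by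
      rw [hm, ← nrmB_sq hpos, sta_const hpos hlam h₀, nrmB_sq hpos]
    have expand : B (x + w - latE lam) (x + w - latE lam)
        = B (x - latE lam) (x - latE lam) + 2 * B (x - latE lam) w + B w w := by
      have hxw : x + w - latE lam = (x - latE lam) + w := by ring
      rw [hxw]
      simp only [map_add, LinearMap.add_apply]
      rw [hsymm w (x - latE lam)]; ring
    rw [expand, hmsq, horth]
  -- stations are close
  have hclose : ∀ lam ∈ sta B x, nrmB B (x + w - latE lam) ≤ m + nrmB B w := by
    intro lam hlam
    have hc : B (x - latE lam₀) w ≤ m * nrmB B w := by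
      have := cauchyB hsymm hpos (x - latE lam₀) w
      rwa [← hm] at this
    have hb : B (x + w - latE lam) (x + w - latE lam) ≤ (m + nrmB B w) ^ 2 := by
      rw [hval lam hlam]
      have hww : B w w = nrmB B w ^ 2 := (nrmB_sq hpos w).symm
      nlinarith
    calc nrmB B (x + w - latE lam) = Real.sqrt (B (x + w - latE lam) (x + w - latE lam)) := rfl
      _ ≤ Real.sqrt ((m + nrmB B w) ^ 2) := Real.sqrt_le_sqrt hb
      _ = m + nrmB B w := by
          rw [Real.sqrt_sq_eq_abs]; exact abs_of_nonneg (by linarith)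
  -- non-stations remain far
  have hfar : ∀ mu, mu ∉ sta B x → ρ - nrmB B w ≤ nrmB B (x + w - latE mu) := by
    intro mu hmu
    have h1 : nrmB B (x - latE mu) - nrmB B w ≤ nrmB B (x + w - latE mu) := by
      have := nrmB_rev_triangle hsymm hpos (x - latE mu) w
      have he : x - latE mu + w = x + w - latE mu := by ring
      rwa [he] at this
    linarith [hρ mu hmu]
  have hkey : ∀ lam ∈ sta B x, ∀ mu, mu ∉ sta B x →
      nrmB B (x + w - latE lam) < nrmB B (x + w - latE mu) := by
    intro lam hlam mu hmu
    have := hclose lam hlam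
    have := hfar mu hmu
    linarith
  -- conclude
  ext nu
  constructor
  · intro hnu
    by_contra hns
    exact absurd (hnu lam₀) (not_le.mpr (hkey lam₀ h₀ nu hns))
  · intro hnu mu
    by_cases hmu : mu ∈ sta B x
    · have h1 := hval nu hnu
      have h2 := hval mu hmu
      apply nrmB_le_nrmB
      rw [h1, h2]
    · exact (hkey nu hnu mu hmu).le

lemma ballB_convex (hsymm : HSymm B) (hpos : HPos B) (y : Fin r → ℝ) (m : ℝ) :
    Convex ℝ {z : Fin r → ℝ | nrmB B (y - z) ≤ m} := by
  intro z₁ hz₁ z₂ hz₂ a b ha hb hab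
  simp only [Set.mem_setOf_eq] at *
  have he : y - (a • z₁ + b • z₂) = a • (y - z₁) + b • (y - z₂) := by
    have h' : (a + b) • y = y := by rw [hab, one_smul]
    nth_rewrite 1 [← h']
    rw [add_smul, smul_sub, smul_sub]; abel
  rw [he]
  calc nrmB B (a • (y - z₁) + b • (y - z₂))
      ≤ nrmB B (a • (y - z₁)) + nrmB B (b • (y - z₂)) := nrmB_triangle hsymm hpos _ _
    _ = a * nrmB B (y - z₁) + b * nrmB B (y - z₂) := by
        rw [nrmB_smul, nrmB_smul, abs_of_nonneg ha, abs_of_nonneg hb]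
    _ ≤ a * m + b * m :=
        add_le_add (mul_le_mul_of_nonneg_left hz₁ ha) (mul_le_mul_of_nonneg_left hz₂ hb)
    _ = m := by rw [← add_mul, hab, one_mul]

lemma Dcell_subset_ball (hsymm : HSymm B) (hpos : HPos B) {y : Fin r → ℝ} {lam₀ : Fin r → ℤ}
    (h₀ : lam₀ ∈ sta B y) :
    Dcell B y ⊆ {z : Fin r → ℝ | nrmB B (y - z) ≤ nrmB B (y - latE lam₀)} := by
  apply convexHull_min _ (ballB_convex hsymm hpos y _)
  rintro z ⟨lam, hlam, rfl⟩
  exact le_of_eq (sta_const hpos hlam h₀)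

lemma sta_subset_of_Dcell_subset (hr : 1 ≤ r) (hsymm : HSymm B) (hpos : HPos B)
    {x y : Fin r → ℝ} (h : Dcell B x ⊆ Dcell B y) : sta B x ⊆ sta B y := by
  obtain ⟨lam₀, h₀⟩ := sta_nonempty hr hpos y
  intro lam hlam
  have hmem : latE lam ∈ Dcell B y := h (subset_convexHull ℝ _ ⟨lam, hlam, rfl⟩)
  have hle : nrmB B (y - latE lam) ≤ nrmB B (y - latE lam₀) :=
    Dcell_subset_ball hsymm hpos h₀ hmem
  intro mu
  exact hle.trans (h₀ mu)

lemma sta_eq_of_Dcell_eq (hr : 1 ≤ r) (hsymm : HSymm B) (hpos : HPos B)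
    {x y : Fin r → ℝ} (h : Dcell B x = Dcell B y) : sta B x = sta B y :=
  le_antisymm (sta_subset_of_Dcell_subset hr hsymm hpos h.le)
    (sta_subset_of_Dcell_subset hr hsymm hpos h.ge)

/-- Equidistance: points equidistant from two lattice points satisfy a linear relation. -/
lemma sta_equidist (hsymm : HSymm B) (hpos : HPos B) {z : Fin r → ℝ} {lam mu : Fin r → ℤ}
    (hl : lam ∈ sta B z) (hm : mu ∈ sta B z) :
    2 * B z (latE lam) - 2 * B z (latE mu)
      = B (latE lam) (latE lam) - B (latE mu) (latE mu) := by
  have h1 : B (z - latE lam) (z - latE lam) = B (z - latE mu) (z - latE mu) := by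
    rw [← nrmB_sq hpos, ← nrmB_sq hpos, sta_const hpos hl hm]
  simp only [map_sub, LinearMap.sub_apply] at h1
  rw [hsymm (latE lam) z, hsymm (latE mu) z] at h1
  linarith [h1]

end lemmas

/-- for every `x ∈ ℝ^r`,
`dim D(x) + dim V(D(x)) = r`. -/
theorem stmt10 (r : ℕ) (hr : 1 ≤ r) (B : LinearMap.BilinForm ℝ (Fin r → ℝ))
    (hsymm : ∀ x y : Fin r → ℝ, B x y = B y x)
    (hpos : ∀ x : Fin r → ℝ, x ≠ 0 → 0 < B x x)
    (hint : ∀ lam mu : Fin r → ℤ, ∃ n : ℤ, B (latE lam) (latE mu) = (n : ℝ)) :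
    ∀ x : Fin r → ℝ, setDim (Dcell B x) + setDim (Vcell B (Dcell B x)) = r := by
  intro x
  have hsymm' : HSymm B := hsymm
  have hpos' : HPos B := hpos
  obtain ⟨lam₀, h₀⟩ := sta_nonempty hr hpos' x
  set P : Set (Fin r → ℝ) := latE '' sta B x with hP
  set W : Submodule ℝ (Fin r → ℝ) := vectorSpan ℝ P with hW
  set U : Submodule ℝ (Fin r → ℝ) := B.orthogonal W with hU
  have hrefl : B.IsRefl := fun u v h => by rw [hsymm]; exact h
  -- dim D(x) = finrank W
  have hD : setDim (Dcell B x) = Module.finrank ℝ W := by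
    unfold setDim Dcell
    rw [affineSpan_convexHull, direction_affineSpan]
  -- any y with the same station set satisfies y - x ∈ U
  have hWgen : ∀ y : Fin r → ℝ, sta B y = sta B x → y - x ∈ U := by
    intro y hy
    rw [hU, LinearMap.BilinForm.mem_orthogonal_iff]
    intro n hn
    rw [hW, vectorSpan_def] at hn
    induction hn using Submodule.span_induction with
    | mem v hv =>
      obtain ⟨p, hp, q, hq, rfl⟩ := Set.mem_vsub.mp hv
      obtain ⟨lam, hlam, rfl⟩ := hp
      obtain ⟨mu, hmu, rfl⟩ := hq
      have hlx : lam ∈ sta B y := hy ▸ hlam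
      have hmx : mu ∈ sta B y := hy ▸ hmu
      have e1 := sta_equidist hsymm' hpos' hlx hmx
      have e2 := sta_equidist hsymm' hpos' hlam hmu
      show B (latE lam -ᵥ latE mu) (y - x) = 0
      have hv1 : latE lam -ᵥ latE mu = latE lam - latE mu := rfl
      rw [hv1]
      have expand : B (latE lam - latE mu) (y - x)
          = (B (latE lam) y - B (latE mu) y) - (B (latE lam) x - B (latE mu) x) := by
        simp only [map_sub, LinearMap.sub_apply]; try ring
      rw [expand, hsymm' (latE lam) y, hsymm' (latE mu) y,
        hsymm' (latE lam) x, hsymm' (latE mu) x]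
      linarith
    | zero => simp [LinearMap.BilinForm.IsOrtho]
    | add v w _ _ hv hw =>
      show B (v + w) (y - x) = 0
      rw [map_add, LinearMap.add_apply, hv, hw, add_zero]
    | smul t v _ hv =>
      show B (t • v) (y - x) = 0
      rw [map_smul, LinearMap.smul_apply, hv, smul_zero]
  -- the affine subspace through x with direction U
  set SA : AffineSubspace ℝ (Fin r → ℝ) := AffineSubspace.mk' x U with hSA
  have hSAset : (SA : Set (Fin r → ℝ)) = (fun y => y - x) ⁻¹' (U : Set (Fin r → ℝ)) := by
    ext y
    rw [hSA, SetLike.mem_coe, AffineSubspace.mem_mk']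
    rfl
  have hSAclosed : IsClosed (SA : Set (Fin r → ℝ)) := by
    rw [hSAset]
    exact (U.closed_of_finiteDimensional).preimage (continuous_id.sub continuous_const)
  have hsub : {y : Fin r → ℝ | Dcell B y = Dcell B x} ⊆ (SA : Set (Fin r → ℝ)) := by
    intro y hy
    rw [hSA, SetLike.mem_coe, AffineSubspace.mem_mk']
    exact hWgen y (sta_eq_of_Dcell_eq hr hsymm' hpos' hy)
  have hVsub : Vcell B (Dcell B x) ⊆ (SA : Set (Fin r → ℝ)) :=
    closure_minimal hsub hSAclosed
  have dir1 : (affineSpan ℝ (Vcell B (Dcell B x))).direction ≤ U := by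
    have h1 : affineSpan ℝ (Vcell B (Dcell B x)) ≤ SA := affineSpan_le.mpr hVsub
    have h2 := AffineSubspace.direction_le h1
    rwa [hSA, AffineSubspace.direction_mk'] at h2
  have dir2 : U ≤ (affineSpan ℝ (Vcell B (Dcell B x))).direction := by
    intro u hu
    rcases eq_or_ne u 0 with rfl | hu0
    · exact Submodule.zero_mem _
    · obtain ⟨ε, hε, hpert⟩ := sta_perturb hr hsymm' hpos' x
      have hnu : 0 < nrmB B u := by
        rcases (nrmB_nonneg (B := B) u).lt_or_eq with h | h
        · exact h
        · exact absurd (nrmB_eq_zero hpos' h.symm) hu0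
      set t : ℝ := ε / (2 * nrmB B u) with ht
      have htpos : 0 < t := div_pos hε (by linarith)
      have horth : ∀ lam ∈ sta B x, ∀ mu ∈ sta B x,
          B (t • u) (latE lam - latE mu) = 0 := by
        intro lam hlam mu hmu
        have hd : latE lam - latE mu ∈ W := by
          rw [hW]
          exact vsub_mem_vectorSpan ℝ ⟨lam, hlam, rfl⟩ ⟨mu, hmu, rfl⟩
        have : B (latE lam - latE mu) u = 0 :=
          (LinearMap.BilinForm.mem_orthogonal_iff.mp hu) _ hd
        rw [map_smul, LinearMap.smul_apply, hsymm' u (latE lam - latE mu), this, smul_zero]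
      have hsmall : nrmB B (t • u) < ε := by
        have h2 : t * nrmB B u = ε / 2 := by
          rw [ht]; field_simp
        rw [nrmB_smul, abs_of_pos htpos, h2]
        linarith
      have hw : sta B (x + t • u) = sta B x := hpert (t • u) horth hsmall
      have hmem1 : x + t • u ∈ Vcell B (Dcell B x) := by
        apply subset_closure
        show Dcell B (x + t • u) = Dcell B x
        unfold Dcell; rw [hw]
      have hmem2 : x ∈ Vcell B (Dcell B x) := subset_closure rfl
      have hmemd : (x + t • u) -ᵥ x ∈ (affineSpan ℝ (Vcell B (Dcell B x))).direction :=
        AffineSubspace.vsub_mem_direction (mem_affineSpan ℝ hmem1) (mem_affineSpan ℝ hmem2)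
      have hvs : (x + t • u) -ᵥ x = t • u := by
        rw [vsub_eq_sub]; ring
      rw [hvs] at hmemd
      have := Submodule.smul_mem _ t⁻¹ hmemd
      rwa [inv_smul_smul₀ htpos.ne'] at this
  have hV : setDim (Vcell B (Dcell B x)) = Module.finrank ℝ U := by
    unfold setDim
    rw [le_antisymm dir1 dir2]
  -- dimension count
  have hcount := LinearMap.BilinForm.finrank_add_finrank_orthogonal hrefl W
  have hbot : W ⊓ B.orthogonal ⊤ = ⊥ := by
    rw [eq_bot_iff]
    rintro v ⟨hv1, hv2⟩
    have h3 := (LinearMap.BilinForm.mem_orthogonal_iff.mp hv2) v Submodule.mem_top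
    have : B v v = 0 := h3
    simp [Bdef hpos' this]
  rw [hbot] at hcount
  simp only [finrank_bot, add_zero] at hcount
  have hfr : Module.finrank ℝ (Fin r → ℝ) = r := by
    rw [Module.finrank_pi]; simp
  rw [hD, hV, hU, hcount, hfr]
end

section
/- Let R be a commutative ring and let f ∈ R[[X]] be a formal power series with constant coefficient 1. Then there exists a unique sequence (r_i)_{i ≥ 1} of elements of R such that for every N ≥ 1, f ≡ ∏_{i=1}^{N} (1 − r_i X^i) modulo X^{N+1}; that is, f is uniquely the (X-adically convergent) infinite product ∏_{i ≥ 1} (1 − r_i X^i). -/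
open PowerSeries Finset

noncomputable def aux18 {R : Type*} [CommRing R] (f : PowerSeries R) : ℕ → R × PowerSeries R
  | 0 => (PowerSeries.coeff 1 (1 - f), 1)
  | N + 1 =>
    let p := aux18 f N
    let P := p.2 * (1 - PowerSeries.C p.1 * PowerSeries.X ^ (N + 1))
    (PowerSeries.coeff (N + 2) (P - f), P)

lemma aux18_snd {R : Type*} [CommRing R] (f : PowerSeries R) (N : ℕ) :
    (aux18 f N).2 = ∏ i ∈ Finset.range N,
      (1 - PowerSeries.C ((aux18 f i).1) * PowerSeries.X ^ (i + 1)) := by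
  induction N with
  | zero => simp [aux18]
  | succ N ih => rw [Finset.prod_range_succ, ← ih]; rfl

lemma aux18_fst {R : Type*} [CommRing R] (f : PowerSeries R) (N : ℕ) :
    (aux18 f N).1 = PowerSeries.coeff (N + 1) ((aux18 f N).2 - f) := by
  cases N with
  | zero => simp [aux18]
  | succ N => rfl

lemma aux18_const {R : Type*} [CommRing R] (f : PowerSeries R) (N : ℕ) :
    PowerSeries.constantCoeff (aux18 f N).2 = 1 := by
  induction N with
  | zero => simp [aux18]
  | succ N ih =>
    show PowerSeries.constantCoeff ((aux18 f N).2 * _) = 1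
    rw [map_mul, ih]
    simp

lemma aux18_dvd {R : Type*} [CommRing R] (f : PowerSeries R)
    (hf : PowerSeries.constantCoeff f = 1) (N : ℕ) :
    (PowerSeries.X : PowerSeries R) ^ (N + 1) ∣ (f - (aux18 f N).2) := by
  induction N with
  | zero =>
    rw [pow_one, PowerSeries.X_dvd_iff, map_sub, hf]
    simp [aux18]
  | succ N ih =>
    have hP : (aux18 f (N + 1)).2
        = (aux18 f N).2 - PowerSeries.C ((aux18 f N).1) * PowerSeries.X ^ (N + 1) * (aux18 f N).2 := by
      show (aux18 f N).2 * _ = _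
      ring
    rw [PowerSeries.X_pow_dvd_iff]
    intro m hm
    rw [hP]
    have hdvd2 : (PowerSeries.X : PowerSeries R) ^ (N + 1) ∣
        PowerSeries.C ((aux18 f N).1) * PowerSeries.X ^ (N + 1) * (aux18 f N).2 :=
      ⟨PowerSeries.C ((aux18 f N).1) * (aux18 f N).2, by ring⟩
    rcases Nat.lt_or_ge m (N + 1) with h | h
    · have h1 := (PowerSeries.X_pow_dvd_iff.mp ih) m h
      have h2 := (PowerSeries.X_pow_dvd_iff.mp hdvd2) m h
      have : f - ((aux18 f N).2 - PowerSeries.C ((aux18 f N).1) * PowerSeries.X ^ (N + 1) * (aux18 f N).2)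
          = (f - (aux18 f N).2) + PowerSeries.C ((aux18 f N).1) * PowerSeries.X ^ (N + 1) * (aux18 f N).2 := by ring
      rw [this, map_add, h1, h2, add_zero]
    · have hm' : m = N + 1 := le_antisymm (Nat.lt_succ_iff.mp hm) h
      subst hm'
      have : f - ((aux18 f N).2 - PowerSeries.C ((aux18 f N).1) * PowerSeries.X ^ (N + 1) * (aux18 f N).2)
          = (f - (aux18 f N).2) + PowerSeries.C ((aux18 f N).1) * (PowerSeries.X ^ (N + 1) * (aux18 f N).2) := by ring
      rw [this, map_add]
      have hc : (PowerSeries.coeff (N + 1))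
          (PowerSeries.C ((aux18 f N).1) * (PowerSeries.X ^ (N + 1) * (aux18 f N).2))
          = (aux18 f N).1 := by
        rw [PowerSeries.coeff_C_mul]
        have := PowerSeries.coeff_X_pow_mul ((aux18 f N).2) (N + 1) 0
        rw [zero_add] at this
        rw [this, PowerSeries.coeff_zero_eq_constantCoeff, aux18_const, mul_one]
      rw [hc, aux18_fst, map_sub, map_sub]
      ring

/-- every formal power series `f ∈ R[[X]]` with constant coefficient `1`
is, uniquely, the `X`-adically convergent infinite product `∏_{i ≥ 1} (1 − r_i X^i)`:
there is a unique sequence `(r_i)_{i ≥ 1}` (encoded as `rs : ℕ → R`, `r_{i+1} = rs i`)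
such that for every `N ≥ 1`, `f ≡ ∏_{i=1}^{N} (1 − r_i X^i) (mod X^{N+1})`. -/
theorem stmt18 (R : Type*) [CommRing R] (f : PowerSeries R)
    (hf : PowerSeries.constantCoeff f = 1) :
    ∃! rs : ℕ → R, ∀ N : ℕ, 1 ≤ N →
      (PowerSeries.X : PowerSeries R) ^ (N + 1) ∣
        (f - ∏ i ∈ Finset.range N, (1 - PowerSeries.C (rs i) * PowerSeries.X ^ (i + 1))) := by
  refine ⟨fun N => (aux18 f N).1, fun N _ => ?_, ?_⟩
  · rw [← aux18_snd]
    exact aux18_dvd f hf N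
  · intro rs hrs
    funext N
    induction N using Nat.strong_induction_on with
    | _ N ih =>
      have hPeq : ∏ i ∈ Finset.range N, (1 - PowerSeries.C (rs i) * PowerSeries.X ^ (i + 1))
          = ∏ i ∈ Finset.range N, (1 - PowerSeries.C ((aux18 f i).1) * PowerSeries.X ^ (i + 1)) := by
        apply Finset.prod_congr rfl
        intro i hi
        rw [ih i (Finset.mem_range.mp hi)]
      have h1 := hrs (N + 1) (Nat.le_add_left 1 N)
      have h2 : (PowerSeries.X : PowerSeries R) ^ (N + 2) ∣
          (f - ∏ i ∈ Finset.range (N + 1),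
            (1 - PowerSeries.C ((aux18 f i).1) * PowerSeries.X ^ (i + 1))) := by
        rw [← aux18_snd]; exact aux18_dvd f hf (N + 1)
      have h3 := dvd_sub h2 h1
      rw [Finset.prod_range_succ, Finset.prod_range_succ, hPeq] at h3
      set P := ∏ i ∈ Finset.range N, (1 - PowerSeries.C ((aux18 f i).1) * PowerSeries.X ^ (i + 1)) with hPdef
      have hconst : PowerSeries.constantCoeff P = 1 := by
        rw [hPdef, ← aux18_snd]; exact aux18_const f N
      have h4 : f - P * (1 - PowerSeries.C ((aux18 f N).1) * PowerSeries.X ^ (N + 1))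
          - (f - P * (1 - PowerSeries.C (rs N) * PowerSeries.X ^ (N + 1)))
          = PowerSeries.C ((aux18 f N).1 - rs N) * (PowerSeries.X ^ (N + 1) * P) := by
        rw [map_sub]; ring
      rw [h4] at h3
      have h5 := PowerSeries.X_pow_dvd_iff.mp h3 (N + 1) (by omega)
      rw [PowerSeries.coeff_C_mul] at h5
      have h6 := PowerSeries.coeff_X_pow_mul P (N + 1) 0
      rw [zero_add] at h6
      rw [h6, PowerSeries.coeff_zero_eq_constantCoeff, hconst, mul_one, sub_eq_zero] at h5
      exact h5.symm
end
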